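/- arXiv:1201.2977 — 8 statements merged into one kernel-verified Lean document; each statement's English description precedes it below -/
import Mathlib

section
/- Let n ≥ 1 and let {z_I}_{I⊆[n]} be real parameters with z_∅ = 0 that are supermodular (z_I + z_J ≤ z_{I∪J} + z_{I∩J} for all I, J ⊆ [n]) and monotone (z_I ≤ z_J whenever I ⊆ J ⊆ [n]). Fix 0 ≤ q ≤ 1 and define parameters {z'_K}_{K⊆[n+1]} by z'_J = q·z_J and z'_{J∪{n+1}} = z_J for all J ⊆ [n]. Then the parameters {z'_K} are supermodular: z'_K + z'_L ≤ z'_{K∪L} + z'_{K∩L} for all K, L ⊆ [n+1]. -/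
/-- The lifted hyperplane parameters `z'` on subsets of `[n+1]`: for `J ⊆ [n]`,
`z'_J = q·z_J` and `z'_{J ∪ {n+1}} = z_J`. A subset `K ⊆ [n+1]` corresponds to
the pair `(J, whether n+1 ∈ K)` where `J = {j ∈ [n] : j ∈ K}`. -/
def liftParams {n : ℕ} (z : Finset (Fin n) → ℝ) (q : ℝ) :
    Finset (Fin (n + 1)) → ℝ := fun K =>
  if Fin.last n ∈ K then z (Finset.univ.filter fun j : Fin n => j.castSucc ∈ K)
  else q * z (Finset.univ.filter fun j : Fin n => j.castSucc ∈ K)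

/-- Theorem: if `{z_I}` is supermodular and monotone with `z_∅ = 0` and
`0 ≤ q ≤ 1`, then the lifted parameters `{z'_K}` are supermodular. -/
theorem lifted_params_supermodular (n : ℕ) (hn : 1 ≤ n)
    (z : Finset (Fin n) → ℝ) (hz0 : z ∅ = 0)
    (hsuper : ∀ I J : Finset (Fin n), z I + z J ≤ z (I ∪ J) + z (I ∩ J))
    (hmono : ∀ I J : Finset (Fin n), I ⊆ J → z I ≤ z J)
    (q : ℝ) (hq0 : 0 ≤ q) (hq1 : q ≤ 1) :
    ∀ K L : Finset (Fin (n + 1)),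
      liftParams z q K + liftParams z q L ≤
        liftParams z q (K ∪ L) + liftParams z q (K ∩ L) := by
  intro K L
  set A := Finset.univ.filter fun j : Fin n => j.castSucc ∈ K with hA
  set B := Finset.univ.filter fun j : Fin n => j.castSucc ∈ L with hB
  have hU : (Finset.univ.filter fun j : Fin n => j.castSucc ∈ K ∪ L) = A ∪ B := by
    ext j; simp [hA, hB]
  have hI : (Finset.univ.filter fun j : Fin n => j.castSucc ∈ K ∩ L) = A ∩ B := by
    ext j; simp [hA, hB]
  have hAB : z A + z B ≤ z (A ∪ B) + z (A ∩ B) := hsuper A B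
  have hmAB : z (A ∩ B) ≤ z A := hmono _ _ Finset.inter_subset_left
  have hmBA : z (A ∩ B) ≤ z B := hmono _ _ Finset.inter_subset_right
  simp only [liftParams, hU, hI, ← hA, ← hB]
  by_cases hK : Fin.last n ∈ K <;> by_cases hL : Fin.last n ∈ L <;>
    simp only [hK, hL, Finset.mem_union, Finset.mem_inter, if_true, if_false,
      true_and, and_true, true_or, or_true, if_pos, and_false, false_and,
      or_false, false_or, ite_true, ite_false]
  · exact hAB
  · nlinarith [hAB, hmBA]
  · nlinarith [hAB, hmAB]
  · nlinarith [hAB, hmAB, hmBA]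
end

section
/- Let n ≥ 1 and let {z_I}_{I⊆[n]} be real parameters with z_∅ = 0 that are supermodular (z_I + z_J ≤ z_{I∪J} + z_{I∩J} for all I, J ⊆ [n]) and monotone (z_I ≤ z_J whenever I ⊆ J). For 0 ≤ q ≤ 1 let P(q) ⊆ ℝ^{n+1} be the q-lifting. Then P(q) equals the Minkowski sum q·P(1) + (1−q)·P(0) = { q·a + (1−q)·b : a ∈ P(1), b ∈ P(0) }. -/
/-- The generalized permutahedron
`P_m({z_I}) = { t ∈ ℝ^m : Σ_i t_i = z_{[m]}, Σ_{i∈I} t_i ≥ z_I for all I }`. -/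
def Pz (m : ℕ) (z : Finset (Fin m) → ℝ) : Set (Fin m → ℝ) :=
  {t | ∑ i, t i = z Finset.univ ∧ ∀ I : Finset (Fin m), z I ≤ ∑ i ∈ I, t i}

namespace QLift

open Finset

variable {m : ℕ}

/-- The set of the first `k` elements in the order given by `σ`. -/
def gS (σ : Equiv.Perm (Fin m)) (k : ℕ) : Finset (Fin m) :=
  Finset.univ.filter fun i => (σ.symm i : ℕ) < k

/-- The greedy vertex of `Pz m z` associated to the ordering `σ`. -/
def greedy (z : Finset (Fin m) → ℝ) (σ : Equiv.Perm (Fin m)) : Fin m → ℝ :=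
  fun i => z (gS σ ((σ.symm i : ℕ) + 1)) - z (gS σ (σ.symm i : ℕ))

lemma gS_zero (σ : Equiv.Perm (Fin m)) : gS σ 0 = ∅ := by simp [gS]

lemma gS_top (σ : Equiv.Perm (Fin m)) {k : ℕ} (hk : m ≤ k) : gS σ k = Finset.univ := by
  ext i
  simp only [gS, mem_filter, mem_univ, true_and, iff_true]
  exact lt_of_lt_of_le (σ.symm i).isLt hk

lemma gS_succ (σ : Equiv.Perm (Fin m)) {k : ℕ} (hk : k < m) :
    gS σ (k + 1) = insert (σ ⟨k, hk⟩) (gS σ k) := by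
  ext i
  simp only [gS, mem_filter, mem_univ, true_and, mem_insert, Nat.lt_succ_iff_lt_or_eq]
  have h : ((σ.symm i : ℕ) = k) ↔ i = σ ⟨k, hk⟩ := by
    rw [← Equiv.symm_apply_eq]
    exact (@Fin.ext_iff _ (σ.symm i) ⟨k, hk⟩).symm
  rw [h, or_comm]

lemma not_mem_gS (σ : Equiv.Perm (Fin m)) {k : ℕ} (hk : k < m) :
    σ ⟨k, hk⟩ ∉ gS σ k := by
  simp [gS]

lemma greedy_apply (z : Finset (Fin m) → ℝ) (σ : Equiv.Perm (Fin m)) {k : ℕ} (hk : k < m) :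
    greedy z σ (σ ⟨k, hk⟩) = z (gS σ (k + 1)) - z (gS σ k) := by
  simp [greedy]

lemma greedy_sum_univ (z : Finset (Fin m) → ℝ) (hz0 : z ∅ = 0) (σ : Equiv.Perm (Fin m)) :
    ∑ i, greedy z σ i = z Finset.univ := by
  have h1 : ∑ i, greedy z σ i = ∑ k : Fin m, greedy z σ (σ k) := (Equiv.sum_comp σ _).symm
  have h2 : ∀ k : Fin m, greedy z σ (σ k)
      = (fun j : ℕ => z (gS σ (j + 1)) - z (gS σ j)) (k : ℕ) := by
    intro k; simp [greedy]
  rw [h1, Finset.sum_congr rfl fun k _ => h2 k,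
    Fin.sum_univ_eq_sum_range (fun j : ℕ => z (gS σ (j + 1)) - z (gS σ j)) m,
    Finset.sum_range_sub (fun k => z (gS σ k)), gS_zero, gS_top σ le_rfl, hz0, sub_zero]

lemma greedy_partial (z : Finset (Fin m) → ℝ) (hz0 : z ∅ = 0)
    (hsuper : ∀ I J, z I + z J ≤ z (I ∪ J) + z (I ∩ J)) (σ : Equiv.Perm (Fin m))
    (J : Finset (Fin m)) :
    ∀ k, k ≤ m → z (gS σ k ∩ J) ≤ ∑ i ∈ gS σ k ∩ J, greedy z σ i := by
  intro k
  induction k with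
  | zero => intro _; simp [gS_zero, hz0]
  | succ k ih =>
    intro hk1
    have hk : k < m := hk1
    have ihk := ih hk.le
    rw [gS_succ σ hk]
    set a := σ ⟨k, hk⟩ with ha
    have hna : a ∉ gS σ k := not_mem_gS σ hk
    by_cases hmem : a ∈ J
    · have hins : insert a (gS σ k) ∩ J = insert a (gS σ k ∩ J) := by
        ext i
        simp only [mem_insert, mem_inter]
        constructor
        · rintro ⟨h1 | h1, h2⟩
          · exact Or.inl h1
          · exact Or.inr ⟨h1, h2⟩
        · rintro (rfl | ⟨h1, h2⟩)
          · exact ⟨Or.inl rfl, hmem⟩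
          · exact ⟨Or.inr h1, h2⟩
      have hna' : a ∉ gS σ k ∩ J := fun h => hna (mem_inter.1 h).1
      rw [hins, Finset.sum_insert hna']
      have hval : greedy z σ a = z (gS σ (k + 1)) - z (gS σ k) := greedy_apply z σ hk
      have hsup := hsuper (gS σ k) (insert a (gS σ k ∩ J))
      have hu : gS σ k ∪ insert a (gS σ k ∩ J) = gS σ (k + 1) := by
        rw [gS_succ σ hk]
        ext i
        simp only [mem_union, mem_insert, mem_inter]
        tauto
      have hi : gS σ k ∩ insert a (gS σ k ∩ J) = gS σ k ∩ J := by
        ext i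
        simp only [mem_inter, mem_insert]
        constructor
        · rintro ⟨h1, rfl | ⟨h2, h3⟩⟩
          · exact absurd h1 hna
          · exact ⟨h1, h3⟩
        · rintro ⟨h1, h2⟩; exact ⟨h1, Or.inr ⟨h1, h2⟩⟩
      rw [hu, hi] at hsup
      rw [← hins]
      have : z (insert a (gS σ k) ∩ J) = z (insert a (gS σ k ∩ J)) := by rw [hins]
      rw [this]
      linarith
    · have hins : insert a (gS σ k) ∩ J = gS σ k ∩ J := by
        ext i
        simp only [mem_inter, mem_insert]
        constructor
        · rintro ⟨rfl | h1, h2⟩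
          · exact absurd h2 hmem
          · exact ⟨h1, h2⟩
        · rintro ⟨h1, h2⟩; exact ⟨Or.inr h1, h2⟩
      rw [hins]
      exact ihk

lemma greedy_mem (z : Finset (Fin m) → ℝ) (hz0 : z ∅ = 0)
    (hsuper : ∀ I J, z I + z J ≤ z (I ∪ J) + z (I ∩ J)) (σ : Equiv.Perm (Fin m)) :
    greedy z σ ∈ Pz m z := by
  refine ⟨greedy_sum_univ z hz0 σ, fun J => ?_⟩
  have h := greedy_partial z hz0 hsuper σ J m le_rfl
  rwa [gS_top σ le_rfl, Finset.univ_inter] at h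

lemma abel_aux (a D : ℕ → ℝ) (ha : Monotone a) (hD : ∀ k, 0 ≤ D k) (hD0 : D 0 = 0) :
    ∀ K, ∑ k ∈ Finset.range K, a k * (D (k + 1) - D k) ≤ a K * D K := by
  intro K
  induction K with
  | zero => simp [hD0]
  | succ K ih =>
    rw [Finset.sum_range_succ]
    have h1 : a K * D (K + 1) ≤ a (K + 1) * D (K + 1) :=
      mul_le_mul_of_nonneg_right (ha (Nat.le_succ K)) (hD _)
    have h2 : a K * (D (K + 1) - D K) = a K * D (K + 1) - a K * D K := by ring
    linarith

lemma greedy_le (hm : 0 < m) (z : Finset (Fin m) → ℝ) (hz0 : z ∅ = 0)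
    (σ : Equiv.Perm (Fin m)) (w : Fin m → ℝ) (hw : Monotone (w ∘ σ))
    (t : Fin m → ℝ) (ht : t ∈ Pz m z) :
    ∑ i, w i * t i ≤ ∑ i, w i * greedy z σ i := by
  set D : ℕ → ℝ := fun k => (∑ i ∈ gS σ k, t i) - z (gS σ k) with hDdef
  have hD0 : D 0 = 0 := by simp [hDdef, gS_zero, hz0]
  have hDnn : ∀ k, 0 ≤ D k := fun k => sub_nonneg.2 (ht.2 _)
  have hDm : D m = 0 := by
    simp only [hDdef, gS_top σ le_rfl]
    rw [show (∑ i ∈ Finset.univ, t i) = ∑ i, t i from rfl, ht.1, sub_self]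
  have hm1 : ∀ k : ℕ, min k (m - 1) < m :=
    fun k => lt_of_le_of_lt (min_le_right _ _) (Nat.sub_lt hm one_pos)
  set a : ℕ → ℝ := fun k => w (σ ⟨min k (m - 1), hm1 k⟩) with hadef
  have hamono : Monotone a := by
    intro k l hkl
    exact hw (show (⟨min k (m-1), hm1 k⟩ : Fin m) ≤ ⟨min l (m-1), hm1 l⟩ from
      Fin.mk_le_mk.2 (min_le_min hkl le_rfl))
  have key : ∑ i, w i * t i - ∑ i, w i * greedy z σ i
      = ∑ k ∈ Finset.range m, a k * (D (k + 1) - D k) := by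
    rw [← Finset.sum_sub_distrib,
      ← Equiv.sum_comp σ (fun i => w i * t i - w i * greedy z σ i),
      ← Fin.sum_univ_eq_sum_range (fun k : ℕ => a k * (D (k + 1) - D k)) m]
    refine Finset.sum_congr rfl fun k _ => ?_
    have hkm : (k : ℕ) < m := k.isLt
    have hmin : min (k : ℕ) (m - 1) = (k : ℕ) := min_eq_left (Nat.le_sub_one_of_lt hkm)
    have hak : a (k : ℕ) = w (σ k) := by
      simp only [hadef]
      congr 1
      exact congrArg σ (Fin.ext hmin)
    have hDd : D ((k : ℕ) + 1) - D (k : ℕ) = t (σ k) - greedy z σ (σ k) := by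
      have hg : greedy z σ (σ k) = z (gS σ ((k : ℕ) + 1)) - z (gS σ (k : ℕ)) := by
        simp [greedy]
      have hs : ∑ i ∈ gS σ ((k : ℕ) + 1), t i = t (σ k) + ∑ i ∈ gS σ (k : ℕ), t i := by
        rw [gS_succ σ hkm, Finset.sum_insert (not_mem_gS σ hkm), Fin.eta]
      simp only [hDdef]
      rw [hs, hg]
      ring
    rw [hak, hDd]
    ring
  have habel := abel_aux a D hamono hDnn hD0 m
  rw [hDm, mul_zero] at habel
  linarith [key ▸ habel]

lemma Pz_convex (z : Finset (Fin m) → ℝ) : Convex ℝ (Pz m z) := by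
  intro x hx y hy α β hα hβ hαβ
  constructor
  · simp only [Pi.add_apply, Pi.smul_apply, smul_eq_mul]
    rw [Finset.sum_add_distrib, ← Finset.mul_sum, ← Finset.mul_sum, hx.1, hy.1, ← add_mul,
      hαβ, one_mul]
  · intro I
    have h1 := hx.2 I
    have h2 := hy.2 I
    simp only [Pi.add_apply, Pi.smul_apply, smul_eq_mul]
    rw [Finset.sum_add_distrib, ← Finset.mul_sum, ← Finset.mul_sum]
    have e1 : α * z I + β * z I = z I := by rw [← add_mul, hαβ, one_mul]
    have e2 : α * z I ≤ α * ∑ i ∈ I, x i := mul_le_mul_of_nonneg_left h1 hα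
    have e3 : β * z I ≤ β * ∑ i ∈ I, y i := mul_le_mul_of_nonneg_left h2 hβ
    linarith

lemma Pz_isClosed (z : Finset (Fin m) → ℝ) : IsClosed (Pz m z) := by
  have h : Pz m z = {t : Fin m → ℝ | ∑ i, t i = z Finset.univ}
      ∩ ⋂ I : Finset (Fin m), {t : Fin m → ℝ | z I ≤ ∑ i ∈ I, t i} := by
    ext t
    simp [Pz, Set.mem_iInter]
  rw [h]
  refine IsClosed.inter (isClosed_eq ?_ continuous_const)
    (isClosed_iInter fun I => isClosed_le continuous_const ?_)
  · exact continuous_finset_sum _ fun i _ => continuous_apply i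
  · exact continuous_finset_sum _ fun i _ => continuous_apply i

lemma Pz_isCompact (z : Finset (Fin m) → ℝ) : IsCompact (Pz m z) := by
  refine IsCompact.of_isClosed_subset
    (isCompact_Icc (a := fun i => z {i})
      (b := fun i => z Finset.univ - z (Finset.univ.erase i))) (Pz_isClosed z) ?_
  intro t ht
  rw [Set.mem_Icc]
  constructor
  · intro i
    have h := ht.2 {i}
    rwa [Finset.sum_singleton] at h
  · intro i
    have h := ht.2 (Finset.univ.erase i)
    have hs : ∑ j ∈ Finset.univ.erase i, t j + t i = ∑ j, t j :=
      Finset.sum_erase_add _ _ (Finset.mem_univ i)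
    have := ht.1
    simp only
    linarith

end QLift

section LiftLemmas

open Finset

variable {n : ℕ} (z : Finset (Fin n) → ℝ)

/-- The restriction of a subset of `[n+1]` to `[n]`. -/
def restK (K : Finset (Fin (n + 1))) : Finset (Fin n) :=
  Finset.univ.filter fun j : Fin n => j.castSucc ∈ K

lemma restK_union (K L : Finset (Fin (n + 1))) : restK (K ∪ L) = restK K ∪ restK L := by
  ext j; simp [restK]

lemma restK_inter (K L : Finset (Fin (n + 1))) : restK (K ∩ L) = restK K ∩ restK L := by
  ext j; simp [restK]

lemma restK_subset {K L : Finset (Fin (n + 1))} (h : K ⊆ L) : restK K ⊆ restK L := by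
  intro j hj
  simp only [restK, mem_filter, mem_univ, true_and] at hj ⊢
  exact h hj

lemma liftParams_one_eq (K : Finset (Fin (n + 1))) : liftParams z 1 K = z (restK K) := by
  unfold liftParams restK
  split <;> simp

lemma liftParams_zero_eq (K : Finset (Fin (n + 1))) :
    liftParams z 0 K = if Fin.last n ∈ K then z (restK K) else 0 := by
  unfold liftParams restK
  split <;> simp

lemma liftParams_combo (q : ℝ) (K : Finset (Fin (n + 1))) :
    liftParams z q K = q * liftParams z 1 K + (1 - q) * liftParams z 0 K := by
  unfold liftParams
  split <;> ring

lemma liftParams_empty (hz0 : z ∅ = 0) (q : ℝ) : liftParams z q ∅ = 0 := by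
  simp [liftParams, hz0]

lemma liftParams_one_super
    (hsuper : ∀ I J : Finset (Fin n), z I + z J ≤ z (I ∪ J) + z (I ∩ J)) :
    ∀ K L : Finset (Fin (n + 1)),
      liftParams z 1 K + liftParams z 1 L ≤ liftParams z 1 (K ∪ L) + liftParams z 1 (K ∩ L) := by
  intro K L
  simp only [liftParams_one_eq, restK_union, restK_inter]
  exact hsuper _ _

lemma liftParams_zero_super (hz0 : z ∅ = 0)
    (hsuper : ∀ I J : Finset (Fin n), z I + z J ≤ z (I ∪ J) + z (I ∩ J))
    (hmono : ∀ I J : Finset (Fin n), I ⊆ J → z I ≤ z J) :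
    ∀ K L : Finset (Fin (n + 1)),
      liftParams z 0 K + liftParams z 0 L ≤ liftParams z 0 (K ∪ L) + liftParams z 0 (K ∩ L) := by
  intro K L
  have hzn : ∀ I : Finset (Fin n), 0 ≤ z I := fun I => hz0 ▸ hmono ∅ I (Finset.empty_subset I)
  simp only [liftParams_zero_eq, restK_union, restK_inter, Finset.mem_union, Finset.mem_inter]
  by_cases hK : Fin.last n ∈ K <;> by_cases hL : Fin.last n ∈ L
  · rw [if_pos hK, if_pos hL, if_pos (Or.inl hK), if_pos ⟨hK, hL⟩]
    exact hsuper _ _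
  · rw [if_pos hK, if_neg hL, if_pos (Or.inl hK), if_neg (fun h => hL h.2), add_zero, add_zero]
    exact hmono _ _ Finset.subset_union_left
  · rw [if_neg hK, if_pos hL, if_pos (Or.inr hL), if_neg (fun h => hK h.1), zero_add, add_zero]
    exact hmono _ _ Finset.subset_union_right
  · rw [if_neg hK, if_neg hL, if_neg (fun h => h.elim hK hL), if_neg (fun h => hK h.1)]

lemma liftParams_one_empty (hz0 : z ∅ = 0) : liftParams z 1 ∅ = 0 :=
  liftParams_empty z hz0 1

lemma liftParams_zero_empty (hz0 : z ∅ = 0) : liftParams z 0 ∅ = 0 :=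
  liftParams_empty z hz0 0

end LiftLemmas

/-- Theorem: the `q`-lifting `P(q) = P_{n+1}({z'})` equals the Minkowski sum
`q·P(1) + (1−q)·P(0)`. -/
theorem q_lifting_minkowski (n : ℕ) (hn : 1 ≤ n)
    (z : Finset (Fin n) → ℝ) (hz0 : z ∅ = 0)
    (hsuper : ∀ I J : Finset (Fin n), z I + z J ≤ z (I ∪ J) + z (I ∩ J))
    (hmono : ∀ I J : Finset (Fin n), I ⊆ J → z I ≤ z J)
    (q : ℝ) (hq0 : 0 ≤ q) (hq1 : q ≤ 1) :
    Pz (n + 1) (liftParams z q) =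
      {x | ∃ a ∈ Pz (n + 1) (liftParams z 1), ∃ b ∈ Pz (n + 1) (liftParams z 0),
        x = q • a + (1 - q) • b} := by
  have h1q : (0 : ℝ) ≤ 1 - q := by linarith
  ext x
  constructor
  · -- hard direction, via separation
    intro hx
    by_contra hxn
    set S : Set (Fin (n + 1) → ℝ) :=
      {x | ∃ a ∈ Pz (n + 1) (liftParams z 1), ∃ b ∈ Pz (n + 1) (liftParams z 0),
        x = q • a + (1 - q) • b} with hSdef
    have hxn' : x ∉ S := hxn
    -- S is convex
    have hconv : Convex ℝ S := by
      rintro p ⟨a1, ha1, b1, hb1, rfl⟩ p' ⟨a2, ha2, b2, hb2, rfl⟩ α β hα hβ hαβ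
      refine ⟨α • a1 + β • a2, QLift.Pz_convex _ ha1 ha2 hα hβ hαβ,
        α • b1 + β • b2, QLift.Pz_convex _ hb1 hb2 hα hβ hαβ, ?_⟩
      funext i
      simp only [Pi.add_apply, Pi.smul_apply, smul_eq_mul]
      ring
    -- S is closed (it is a compact image)
    have hSim : S = (fun p : (Fin (n + 1) → ℝ) × (Fin (n + 1) → ℝ) =>
        q • p.1 + (1 - q) • p.2) ''
        ((Pz (n + 1) (liftParams z 1)) ×ˢ (Pz (n + 1) (liftParams z 0))) := by
      ext y
      constructor
      · rintro ⟨a, ha, b, hb, rfl⟩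
        exact ⟨(a, b), ⟨ha, hb⟩, rfl⟩
      · rintro ⟨⟨a, b⟩, ⟨ha, hb⟩, rfl⟩
        exact ⟨a, ha, b, hb, rfl⟩
    have hcomp : IsCompact S := by
      rw [hSim]
      exact ((QLift.Pz_isCompact _).prod (QLift.Pz_isCompact _)).image
        ((continuous_fst.const_smul q).add (continuous_snd.const_smul (1 - q)))
    obtain ⟨f, u, hfu, hux⟩ :=
      geometric_hahn_banach_closed_point hconv hcomp.isClosed hxn'
    -- express f by a vector w
    set w : Fin (n + 1) → ℝ := fun i => f (fun j => if i = j then (1 : ℝ) else 0) with hwdef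
    have hrepr : ∀ t : Fin (n + 1) → ℝ, f t = ∑ i, w i * t i := by
      intro t
      conv_lhs => rw [pi_eq_sum_univ t]
      rw [map_sum]
      refine Finset.sum_congr rfl fun i _ => ?_
      rw [map_smul, smul_eq_mul, mul_comm]
    -- greedy points
    set σ : Equiv.Perm (Fin (n + 1)) := Tuple.sort w with hσdef
    have hsort : Monotone (w ∘ σ) := Tuple.monotone_sort w
    set g1 := QLift.greedy (liftParams z 1) σ with hg1def
    set g0 := QLift.greedy (liftParams z 0) σ with hg0def
    have hg1 : g1 ∈ Pz (n + 1) (liftParams z 1) :=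
      QLift.greedy_mem _ (liftParams_one_empty z hz0) (liftParams_one_super z hsuper) σ
    have hg0 : g0 ∈ Pz (n + 1) (liftParams z 0) :=
      QLift.greedy_mem _ (liftParams_zero_empty z hz0)
        (liftParams_zero_super z hz0 hsuper hmono) σ
    have hgq_eq : QLift.greedy (liftParams z q) σ = q • g1 + (1 - q) • g0 := by
      funext i
      simp only [QLift.greedy, Pi.add_apply, Pi.smul_apply, smul_eq_mul, hg1def, hg0def]
      rw [liftParams_combo z q, liftParams_combo z q]
      ring
    have hle : ∑ i, w i * x i ≤ ∑ i, w i * QLift.greedy (liftParams z q) σ i :=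
      QLift.greedy_le (Nat.succ_pos n) _ (liftParams_empty z hz0 q) σ w hsort x hx
    have hmem : q • g1 + (1 - q) • g0 ∈ S := ⟨g1, hg1, g0, hg0, rfl⟩
    have h1 := hfu _ hmem
    have h2 : f x ≤ f (q • g1 + (1 - q) • g0) := by
      rw [hrepr x, hrepr (q • g1 + (1 - q) • g0), ← hgq_eq]
      exact hle
    linarith
  · -- easy direction
    rintro ⟨a, ha, b, hb, rfl⟩
    constructor
    · simp only [Pi.add_apply, Pi.smul_apply, smul_eq_mul]
      rw [Finset.sum_add_distrib, ← Finset.mul_sum, ← Finset.mul_sum, ha.1, hb.1,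
        liftParams_combo z q Finset.univ]
    · intro K
      have h1 := ha.2 K
      have h2 := hb.2 K
      simp only [Pi.add_apply, Pi.smul_apply, smul_eq_mul]
      rw [Finset.sum_add_distrib, ← Finset.mul_sum, ← Finset.mul_sum,
        liftParams_combo z q K]
      have e1 : q * liftParams z 1 K ≤ q * ∑ i ∈ K, a i :=
        mul_le_mul_of_nonneg_left h1 hq0
      have e2 : (1 - q) * liftParams z 0 K ≤ (1 - q) * ∑ i ∈ K, b i :=
        mul_le_mul_of_nonneg_left h2 h1q
      linarith
end

section
/- Let c = (c_1,…,c_k) be a composition and let β_i = c_1+⋯+c_i for 0 ≤ i ≤ k. Then for every real q, g_c(q) = Σ_{i=0}^k q^{β_i} / ∏_{j≠i} (β_j − β_i). -/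
open MeasureTheory

/-- Iterated integral defining the composition polynomial, peeling off the
outermost variable first (so the list argument is the reversed composition). -/
noncomputable def gAux : List ℕ → ℝ → ℝ → ℝ
  | [], _, _ => 1
  | a :: rest, q, u => ∫ t in q..u, t ^ (a - 1) * gAux rest q t

/-- The composition polynomial
`g_c(q) = ∫_q^1 ∫_q^{t_k} ⋯ ∫_q^{t_2} t_1^{c_1-1} ⋯ t_k^{c_k-1} dt_1 ⋯ dt_k`. -/
noncomputable def gcomp (c : List ℕ) (q : ℝ) : ℝ := gAux c.reverse q 1

/-- Partial sums `β_i = c_1 + ⋯ + c_i`. -/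
def beta (c : List ℕ) (i : ℕ) : ℕ := (c.take i).sum

/-! Induct on `c` by appending a last part `a`. The outermost integral then has a variable
upper limit, so we prove the closed form of `gAux c.reverse q u` for every `u`, in which `u`
carries the exponents `n - β_i`. Integrating term by term keeps the old nodes `β_i`, each
denominator picking up the factor `n + a - β_i`, and leaves the constant
`-q^(n+a) Σ_i 1 / ∏_{j ≠ i} (β'_j - β'_i)`. This is the term of the new node `β'_(k+1) = n + a`,
because `Σ_i 1 / ∏_{j ≠ i} (x_j - x_i) = 0` for two or more distinct nodes: it is the leading
coefficient of the Lagrange interpolant of the constant `1`. -/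

open Finset

theorem Lagrange.sum_one_div_prod_sub_eq_zero {F ι : Type*} [Field F] [DecidableEq ι]
    {s : Finset ι} {v : ι → F} (hvs : Set.InjOn v s) (hs : 2 ≤ #s) :
    ∑ i ∈ s, 1 / ∏ j ∈ s.erase i, (v i - v j) = 0 := by
  have h := Lagrange.coeff_eq_sum hvs (P := 1) (by
    rw [Polynomial.degree_one]; exact_mod_cast (by omega : 0 < #s))
  simpa [Polynomial.coeff_one, show #s - 1 ≠ 0 by omega] using h.symm

theorem Finset.prod_erase_range_add_one {M : Type*} [CommMonoid M] (f : ℕ → M) {n i : ℕ}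
    (hi : i < n) :
    ∏ j ∈ (range (n + 1)).erase i, f j = f n * ∏ j ∈ (range n).erase i, f j := by
  rw [range_add_one, erase_insert_of_ne (by omega), prod_insert (by simp)]

theorem intervalIntegral.integral_pow_mul_sum_mul_pow {ι : Type*} (s : Finset ι) (f : ι → ℝ)
    (e : ι → ℕ) (a : ℕ) (q u : ℝ) :
    ∫ t in q..u, t ^ a * ∑ i ∈ s, f i * t ^ e i =
      ∑ i ∈ s, f i * ((u ^ (e i + a + 1) - q ^ (e i + a + 1)) / ((e i + a + 1 : ℕ) : ℝ)) := by
  simp_rw [mul_sum, mul_left_comm _ (f _), ← pow_add]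
  rw [intervalIntegral.integral_finsetSum fun i _ =>
    (by fun_prop : Continuous _).intervalIntegrable _ _]
  simp [add_comm a]

namespace beta

theorem le_sum (c : List ℕ) (i : ℕ) : beta c i ≤ c.sum :=
  List.Sublist.sum_le_sum (List.take_sublist i c) (by simp)

theorem append_singleton_of_le {c : List ℕ} (a : ℕ) {i : ℕ} (hi : i ≤ c.length) :
    beta (c ++ [a]) i = beta c i := by
  simp [beta, List.take_append_of_le_length hi]

theorem append_singleton_length (c : List ℕ) (a : ℕ) :
    beta (c ++ [a]) (c.length + 1) = c.sum + a := by
  simp [beta]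

theorem strictMonoOn {c : List ℕ} (hpos : ∀ a ∈ c, 0 < a) :
    StrictMonoOn (beta c) (Set.Iic c.length) := by
  refine strictMonoOn_Iic_of_lt_succ fun m hm => ?_
  rw [Order.succ_eq_add_one, beta, beta, List.sum_take_succ c m hm]
  have := hpos _ (List.getElem_mem hm)
  omega

end beta

noncomputable def betaDenom (c : List ℕ) (i : ℕ) : ℝ :=
  ∏ j ∈ (range (c.length + 1)).erase i, ((beta c j : ℝ) - (beta c i : ℝ))

theorem betaDenom_append_singleton_of_le {c : List ℕ} (a : ℕ) {i : ℕ} (hi : i ≤ c.length) :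
    betaDenom (c ++ [a]) i = (((c.sum + a : ℕ) : ℝ) - beta c i) * betaDenom c i := by
  rw [betaDenom, List.length_append, List.length_singleton,
    prod_erase_range_add_one _ (by omega), beta.append_singleton_length,
    beta.append_singleton_of_le a hi, betaDenom]
  refine congrArg _ (prod_congr rfl fun j hj => ?_)
  rw [beta.append_singleton_of_le a (by simp at hj; omega)]

theorem one_div_betaDenom_append_singleton_length {c : List ℕ} (hpos : ∀ a ∈ c, 0 < a) {a : ℕ}
    (ha : 0 < a) :
    1 / betaDenom (c ++ [a]) (c.length + 1) =
      -∑ i ∈ range (c.length + 1), 1 / betaDenom (c ++ [a]) i := by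
  have hpos' : ∀ b ∈ c ++ [a], 0 < b := by simpa [or_imp, forall_and] using ⟨hpos, ha⟩
  have hinj : Set.InjOn (fun j => -(beta (c ++ [a]) j : ℝ)) (range ((c ++ [a]).length + 1)) := by
    refine (neg_injective.comp Nat.cast_injective).comp_injOn
      ((beta.strictMonoOn hpos').injOn.mono fun j => ?_)
    simp
  have h := Lagrange.sum_one_div_prod_sub_eq_zero hinj (by simp)
  simp only [neg_sub_neg, List.length_append, List.length_singleton] at h
  rw [sum_range_succ] at h
  rw [eq_neg_iff_add_eq_zero, add_comm]
  simpa only [betaDenom, List.length_append, List.length_singleton] using h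

theorem gAux_reverse_eq_sum {c : List ℕ} (hpos : ∀ a ∈ c, 0 < a) (q u : ℝ) :
    gAux c.reverse q u = ∑ i ∈ range (c.length + 1),
      q ^ beta c i / betaDenom c i * u ^ (c.sum - beta c i) := by
  induction c using List.reverseRecOn generalizing u with
  | nil => simp [gAux, betaDenom, beta]
  | append_singleton c a ih =>
    simp only [List.mem_append, List.mem_singleton, or_imp, forall_and, forall_eq] at hpos
    obtain ⟨hc, ha⟩ := hpos
    obtain ⟨b, rfl⟩ : ∃ b, a = b + 1 := Nat.exists_eq_add_one.mpr ha
    rw [List.reverse_append, List.reverse_singleton, List.singleton_append, gAux]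
    simp only [ih hc, Nat.add_sub_cancel, intervalIntegral.integral_pow_mul_sum_mul_pow]
    -- split off the term of the new node and spread it over the old ones
    rw [List.length_append, List.length_singleton, sum_range_succ _ (c.length + 1),
      beta.append_singleton_length, List.sum_append, List.sum_singleton, Nat.sub_self, pow_zero,
      mul_one, div_eq_mul_one_div (q ^ _), one_div_betaDenom_append_singleton_length hc ha,
      mul_neg, mul_sum, ← sum_neg_distrib, ← sum_add_distrib]
    refine sum_congr rfl fun i hi_mem => ?_
    have hi : i ≤ c.length := Nat.lt_succ_iff.mp (mem_range.mp hi_mem)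
    have hle := beta.le_sum c i
    rw [beta.append_singleton_of_le _ hi, betaDenom_append_singleton_of_le _ hi,
      show c.sum - beta c i + b + 1 = c.sum + (b + 1) - beta c i by omega,
      Nat.cast_sub (by omega : beta c i ≤ c.sum + (b + 1))]
    have hq : q ^ beta c i * q ^ (c.sum + (b + 1) - beta c i) = q ^ (c.sum + (b + 1)) := by
      rw [← pow_add]; congr 1; omega
    rw [← hq]
    generalize ((c.sum + (b + 1) : ℕ) : ℝ) - beta c i = n
    ring

/-- Theorem: `g_c(q) = Σ_{i=0}^k q^{β_i} / ∏_{j ≠ i} (β_j − β_i)`. -/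
theorem composition_polynomial_closed_form (c : List ℕ) (hpos : ∀ a ∈ c, 0 < a) (q : ℝ) :
    gcomp c q = ∑ i ∈ Finset.range (c.length + 1),
      q ^ beta c i /
        ∏ j ∈ (Finset.range (c.length + 1)).erase i, ((beta c j : ℝ) - (beta c i : ℝ)) := by
  simp only [gcomp, gAux_reverse_eq_sum hpos, one_pow, mul_one, betaDenom]
end

section
/- Let c = (c_1,…,c_k) be a composition and let m be a positive integer; write mc = (mc_1,…,mc_k). Then for every real q, g_{mc}(q) = (1/m^k) · g_c(q^m). -/
open MeasureTheory

/-! The substitution `s = t ^ m` turns `t ^ (m * a - 1) dt` into `m⁻¹ s ^ (a - 1) ds`; applied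
to each of the nested integrals it produces one factor `m⁻¹` per part of the composition. -/

theorem continuous_gAux (l : List ℕ) (q : ℝ) : Continuous (gAux l q) := by
  induction l with
  | nil => exact continuous_const
  | cons a rest ih =>
    exact intervalIntegral.continuous_primitive
      (fun _ _ => ((continuous_pow _).mul ih).intervalIntegrable _ _) q

theorem pow_mul_sub_one_eq {R : Type*} [Monoid R] (t : R) (m : ℕ) {a : ℕ} (ha : 0 < a) :
    t ^ (m * a - 1) = t ^ (m - 1) * (t ^ m) ^ (a - 1) := by
  rw [← pow_mul, ← pow_add]
  congr 1
  rcases Nat.exists_eq_add_of_lt ha with ⟨b, rfl⟩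
  cases m <;> simp [Nat.add_mul, Nat.mul_succ]; omega

theorem integral_pow_mul_sub_one_mul_comp_pow {f : ℝ → ℝ} (hf : Continuous f) {m a : ℕ}
    (hm : m ≠ 0) (ha : 0 < a) (q u : ℝ) :
    ∫ t in q..u, t ^ (m * a - 1) * f (t ^ m)
      = (m : ℝ)⁻¹ * ∫ s in q ^ m..u ^ m, s ^ (a - 1) * f s := by
  have hsubst := intervalIntegral.integral_deriv_smul_comp (a := q) (b := u)
    (fun x _ => by simpa using hasDerivAt_pow m x) (by fun_prop)
    (show Continuous fun s : ℝ => s ^ (a - 1) * f s by fun_prop)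
  rw [← hsubst, ← intervalIntegral.integral_const_mul]
  refine intervalIntegral.integral_congr fun t _ => ?_
  have hm' : (m : ℝ) ≠ 0 := Nat.cast_ne_zero.mpr hm
  simp only [Function.comp_apply, smul_eq_mul, pow_mul_sub_one_eq t m ha]
  field_simp

theorem gAux_map_mul {m : ℕ} (hm : m ≠ 0) {l : List ℕ} (hpos : ∀ a ∈ l, 0 < a) (q u : ℝ) :
    gAux (l.map (m * ·)) q u = (m : ℝ)⁻¹ ^ l.length * gAux l (q ^ m) (u ^ m) := by
  induction l generalizing u with
  | nil => simp [gAux]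
  | cons a rest ih =>
    have hrest : ∀ b ∈ rest, 0 < b := fun b hb => hpos b (List.mem_cons_of_mem a hb)
    simp only [List.map_cons, gAux, ih hrest, mul_left_comm _ ((m : ℝ)⁻¹ ^ rest.length),
      intervalIntegral.integral_const_mul,
      integral_pow_mul_sub_one_mul_comp_pow (continuous_gAux rest _) hm (hpos a (by simp)),
      List.length_cons, pow_succ]
    ring

/-- Theorem: for a positive integer `m` and the composition `mc = (mc_1, …, mc_k)`,
`g_{mc}(q) = (1/m^k) · g_c(q^m)` for every real `q`. -/
theorem composition_polynomial_dilation (c : List ℕ) (hpos : ∀ a ∈ c, 0 < a)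
    (m : ℕ) (hm : 0 < m) (q : ℝ) :
    gcomp (c.map fun a => m * a) q = (1 / (m : ℝ) ^ c.length) * gcomp c (q ^ m) := by
  rw [gcomp, gcomp, ← List.map_reverse,
    gAux_map_mul hm.ne' (by simpa using hpos), List.length_reverse, one_pow, inv_pow, one_div]
end

section
/- Let c = (c_1,…,c_k) be a composition of size n and let f_c be the reduced composition polynomial, i.e. the polynomial of degree n − k with g_c(q) = (1−q)^k · f_c(q) for all q. Then every coefficient of f_c is a positive real number. -/
open MeasureTheory

/-!
Substituting `t_i = (1 - q) x_i + q` in every variable turns `g_c(q)` into `(1 - q)^k` times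
the integral over the simplex `0 ≤ x_1 ≤ ⋯ ≤ x_k ≤ 1` of `∏ (x_i + q (1 - x_i))^(c_i - 1)`.
Expanded in powers of `q`, this integrand has, for every degree up to `∑ (c_i - 1)`,
a coefficient that is strictly positive in the interior of the simplex, so every coefficient
of `f_c` is the integral of a positive function.
-/

open Polynomial Finset

namespace CompositionPolynomial

noncomputable def coeffIntegral (F : ℝ → ℝ[X]) (N : ℕ) (y : ℝ) : ℝ[X] :=
  ∑ j ∈ range (N + 1), monomial j (∫ x in (0 : ℝ)..y, (F x).coeff j)

section CoeffIntegral

variable {F G : ℝ → ℝ[X]} {N : ℕ}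

theorem coeff_coeffIntegral (F : ℝ → ℝ[X]) (N : ℕ) (y : ℝ) (j : ℕ) :
    (coeffIntegral F N y).coeff j = if j ≤ N then ∫ x in (0 : ℝ)..y, (F x).coeff j else 0 := by
  simp [coeffIntegral, finsetSum_coeff, coeff_monomial]

theorem natDegree_coeffIntegral_le (F : ℝ → ℝ[X]) (N : ℕ) (y : ℝ) :
    (coeffIntegral F N y).natDegree ≤ N :=
  natDegree_le_iff_coeff_eq_zero.2 fun j hj => by
    rw [coeff_coeffIntegral, if_neg (by exact_mod_cast not_le.2 hj)]

theorem continuous_coeff_coeffIntegral (hF : ∀ j, Continuous fun x => (F x).coeff j) (j : ℕ) :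
    Continuous fun y => (coeffIntegral F N y).coeff j := by
  simp_rw [coeff_coeffIntegral]
  split_ifs
  · exact intervalIntegral.continuous_primitive (fun a b => (hF j).intervalIntegrable a b) 0
  · exact continuous_const

theorem eval_coeffIntegral (hdeg : ∀ x, (F x).natDegree ≤ N)
    (hF : ∀ j, Continuous fun x => (F x).coeff j) (q y : ℝ) :
    (coeffIntegral F N y).eval q = ∫ x in (0 : ℝ)..y, (F x).eval q := by
  have hF_eval x : (F x).eval q = ∑ j ∈ range (N + 1), (F x).coeff j * q ^ j :=
    eval_eq_sum_range' (Nat.lt_succ_of_le (hdeg x)) q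
  rw [eval_eq_sum_range' (Nat.lt_succ_of_le (natDegree_coeffIntegral_le F N y))]
  simp_rw [hF_eval]
  rw [intervalIntegral.integral_finsetSum fun j _ =>
    ((hF j).mul_const _).intervalIntegrable 0 y]
  refine sum_congr rfl fun j hj => ?_
  rw [coeff_coeffIntegral, if_pos (Nat.lt_succ_iff.1 (mem_range.1 hj)),
    intervalIntegral.integral_mul_const]

theorem continuous_coeff_mul (hF : ∀ j, Continuous fun x => (F x).coeff j)
    (hG : ∀ j, Continuous fun x => (G x).coeff j) (j : ℕ) :
    Continuous fun x => (F x * G x).coeff j := by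
  simp_rw [coeff_mul]
  exact continuous_finsetSum _ fun p _ => (hF _).fun_mul (hG _)

theorem continuous_coeff_pow (hF : ∀ j, Continuous fun x => (F x).coeff j) (n j : ℕ) :
    Continuous fun x => (F x ^ n).coeff j := by
  induction n generalizing j with
  | zero => simp only [pow_zero, coeff_one]; exact continuous_const
  | succ n ih => simp_rw [pow_succ]; exact continuous_coeff_mul ih hF j

end CoeffIntegral

def CoeffPosUpTo (p : ℝ[X]) (d : ℕ) : Prop :=
  (∀ j, 0 ≤ p.coeff j) ∧ ∀ j ≤ d, 0 < p.coeff j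

namespace CoeffPosUpTo

variable {p r : ℝ[X]} {d e : ℕ}

theorem one : CoeffPosUpTo 1 0 :=
  ⟨fun j => by rw [coeff_one]; split_ifs <;> norm_num,
    fun j hj => by rw [Nat.le_zero.1 hj, coeff_one_zero]; exact one_pos⟩

theorem mul (hp : CoeffPosUpTo p d) (hr : CoeffPosUpTo r e) : CoeffPosUpTo (p * r) (d + e) := by
  have hterm (x : ℕ × ℕ) : 0 ≤ p.coeff x.1 * r.coeff x.2 := mul_nonneg (hp.1 _) (hr.1 _)
  refine ⟨fun j => ?_, fun j hj => ?_⟩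
  · rw [coeff_mul]
    exact sum_nonneg fun x _ => hterm x
  · rw [coeff_mul]
    refine sum_pos' (fun x _ => hterm x) ⟨(min d j, j - min d j), ?_, ?_⟩
    · rw [HasAntidiagonal.mem_antidiagonal]; omega
    · exact mul_pos (hp.2 _ (min_le_left _ _)) (hr.2 _ (by omega))

theorem pow (hp : CoeffPosUpTo p d) (n : ℕ) : CoeffPosUpTo (p ^ n) (d * n) := by
  induction n with
  | zero => exact one
  | succ n ih => rw [pow_succ, Nat.mul_succ]; exact ih.mul hp

end CoeffPosUpTo

/-- The substitution `t = (1 - q) x + q`, as a polynomial in `q`. -/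
noncomputable def substPoly (x : ℝ) : ℝ[X] := C (1 - x) * X + C x

theorem coeff_substPoly (x : ℝ) (j : ℕ) :
    (substPoly x).coeff j = if j = 0 then x else if j = 1 then 1 - x else 0 := by
  rcases j with _ | _ | j <;> simp [substPoly, coeff_C, coeff_X, coeff_one]

theorem eval_substPoly (x q : ℝ) : (substPoly x).eval q = (1 - q) * x + q := by
  simp only [substPoly, eval_add, eval_mul, eval_C, eval_X]
  ring

theorem natDegree_substPoly_le (x : ℝ) : (substPoly x).natDegree ≤ 1 :=
  natDegree_linear_le

theorem continuous_coeff_substPoly (j : ℕ) : Continuous fun x => (substPoly x).coeff j := by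
  simp_rw [coeff_substPoly]
  split_ifs <;> fun_prop

theorem coeffPosUpTo_substPoly {x : ℝ} (hx : x ∈ Set.Ioo 0 1) : CoeffPosUpTo (substPoly x) 1 := by
  refine ⟨fun j => ?_, fun j hj => ?_⟩ <;> rw [coeff_substPoly] <;> split_ifs <;>
    first | linarith [hx.1, hx.2] | omega

/-- `(reducedPoly l y).eval q = gAux l q ((1 - q) y + q) / (1 - q) ^ l.length`. -/
noncomputable def reducedPoly : List ℕ → ℝ → ℝ[X]
  | [], _ => 1
  | a :: l, y => coeffIntegral (fun x => substPoly x ^ (a - 1) * reducedPoly l x)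
      ((a :: l).map (· - 1)).sum y

theorem natDegree_reducedPoly_le :
    ∀ (l : List ℕ) (y : ℝ), (reducedPoly l y).natDegree ≤ (l.map (· - 1)).sum
  | [], _ => by simp [reducedPoly]
  | _ :: _, _ => natDegree_coeffIntegral_le _ _ _

theorem natDegree_substPoly_pow_mul_reducedPoly_le (a : ℕ) (l : List ℕ) (x : ℝ) :
    (substPoly x ^ (a - 1) * reducedPoly l x).natDegree ≤ ((a :: l).map (· - 1)).sum := by
  rw [List.map_cons, List.sum_cons]
  refine natDegree_mul_le.trans (add_le_add ?_ (natDegree_reducedPoly_le l x))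
  calc _ ≤ (a - 1) * (substPoly x).natDegree := natDegree_pow_le
    _ ≤ a - 1 := by simpa using Nat.mul_le_mul_left (a - 1) (natDegree_substPoly_le x)

theorem continuous_coeff_reducedPoly :
    ∀ (l : List ℕ) (j : ℕ), Continuous fun y => (reducedPoly l y).coeff j
  | [], j => by simp only [reducedPoly]; exact continuous_const
  | _ :: l, j => continuous_coeff_coeffIntegral
      (continuous_coeff_mul (continuous_coeff_pow continuous_coeff_substPoly _)
        (continuous_coeff_reducedPoly l)) j

theorem continuous_coeff_substPoly_pow_mul_reducedPoly (a : ℕ) (l : List ℕ) (j : ℕ) :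
    Continuous fun x => (substPoly x ^ (a - 1) * reducedPoly l x).coeff j :=
  continuous_coeff_mul (continuous_coeff_pow continuous_coeff_substPoly _)
    (continuous_coeff_reducedPoly l) j

theorem eval_reducedPoly_cons (a : ℕ) (l : List ℕ) (q y : ℝ) :
    (reducedPoly (a :: l) y).eval q
      = ∫ x in (0 : ℝ)..y, ((1 - q) * x + q) ^ (a - 1) * (reducedPoly l x).eval q := by
  rw [reducedPoly, eval_coeffIntegral (natDegree_substPoly_pow_mul_reducedPoly_le a l)
    (continuous_coeff_substPoly_pow_mul_reducedPoly a l)]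
  simp only [eval_mul, eval_pow, eval_substPoly]

theorem gAux_eq_mul_eval_reducedPoly {q : ℝ} (hq : q ≠ 1) :
    ∀ (l : List ℕ) (y : ℝ),
      gAux l q ((1 - q) * y + q) = (1 - q) ^ l.length * (reducedPoly l y).eval q
  | [], _ => by simp [gAux, reducedPoly]
  | a :: l, y => by
    have hq' : 1 - q ≠ 0 := sub_ne_zero.2 hq.symm
    calc gAux (a :: l) q ((1 - q) * y + q)
        = (1 - q) *
            ∫ x in (0 : ℝ)..y, ((1 - q) * x + q) ^ (a - 1) * gAux l q ((1 - q) * x + q) := by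
          rw [gAux, intervalIntegral.integral_comp_mul_add (fun t => t ^ (a - 1) * gAux l q t) hq',
            smul_eq_mul, ← mul_assoc, mul_inv_cancel₀ hq', one_mul, mul_zero, zero_add]
      _ = (1 - q) ^ (a :: l).length * (reducedPoly (a :: l) y).eval q := by
          simp_rw [gAux_eq_mul_eval_reducedPoly hq l, mul_left_comm _ ((1 - q) ^ l.length),
            intervalIntegral.integral_const_mul, eval_reducedPoly_cons, List.length_cons, pow_succ]
          ring

theorem coeffPosUpTo_reducedPoly :
    ∀ (l : List ℕ) {y : ℝ}, y ∈ Set.Ioc 0 1 → CoeffPosUpTo (reducedPoly l y) (l.map (· - 1)).sum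
  | [], _, _ => CoeffPosUpTo.one
  | a :: l, y, hy => by
    have hintegrand : ∀ x ∈ Set.Ioo 0 y,
        CoeffPosUpTo (substPoly x ^ (a - 1) * reducedPoly l x) ((a :: l).map (· - 1)).sum := by
      intro x hx
      have hx1 : x ∈ Set.Ioo 0 1 := ⟨hx.1, hx.2.trans_le hy.2⟩
      simpa using ((coeffPosUpTo_substPoly hx1).pow (a - 1)).mul
        (coeffPosUpTo_reducedPoly l (Set.Ioo_subset_Ioc_self hx1))
    have hpos : ∀ j ≤ ((a :: l).map (· - 1)).sum, 0 < (reducedPoly (a :: l) y).coeff j := by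
      intro j hj
      rw [reducedPoly, coeff_coeffIntegral, if_pos hj]
      exact intervalIntegral.intervalIntegral_pos_of_pos_on
        ((continuous_coeff_substPoly_pow_mul_reducedPoly a l j).intervalIntegrable 0 y)
        (fun x hx => (hintegrand x hx).2 j hj) hy.1
    refine ⟨fun j => ?_, hpos⟩
    by_cases hj : j ≤ ((a :: l).map (· - 1)).sum
    · exact (hpos j hj).le
    · rw [reducedPoly, coeff_coeffIntegral, if_neg hj]

theorem sum_sub_length_le_sum_map_sub_one : ∀ l : List ℕ, l.sum - l.length ≤ (l.map (· - 1)).sum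
  | [] => le_rfl
  | a :: l => by
    have := sum_sub_length_le_sum_map_sub_one l
    simp only [List.sum_cons, List.length_cons, List.map_cons]
    omega

end CompositionPolynomial

open CompositionPolynomial in
theorem reduced_composition_polynomial_positive_general (c : List ℕ)
    (f : Polynomial ℝ)
    (hf : ∀ q : ℝ, gcomp c q = (1 - q) ^ c.length * f.eval q) :
    ∀ i ≤ c.sum - c.length, 0 < f.coeff i := by
  have hf_eq : f = reducedPoly c.reverse 1 := by
    refine eq_of_infinite_eval_eq _ _
      ((Set.finite_singleton 1).infinite_compl.mono fun q (hq : q ≠ 1) => ?_)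
    refine mul_left_cancel₀ (pow_ne_zero c.length (sub_ne_zero.2 hq.symm)) ?_
    have hg := gAux_eq_mul_eval_reducedPoly hq c.reverse 1
    rw [mul_one, sub_add_cancel, List.length_reverse] at hg
    rw [← hf, gcomp, hg]
  intro i hi
  rw [hf_eq]
  refine (coeffPosUpTo_reducedPoly c.reverse ⟨one_pos, le_rfl⟩).2 i ?_
  rw [List.map_reverse, List.sum_reverse]
  exact hi.trans (sum_sub_length_le_sum_map_sub_one c)

/-- Theorem: every coefficient of the reduced composition polynomial `f_c`,
i.e. the polynomial of degree `n − k` with `g_c(q) = (1−q)^k · f_c(q)`, is positive. -/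
theorem reduced_composition_polynomial_positive (c : List ℕ) (hpos : ∀ a ∈ c, 0 < a)
    (f : Polynomial ℝ) (hdeg : f.natDegree = c.sum - c.length)
    (hf : ∀ q : ℝ, gcomp c q = (1 - q) ^ c.length * f.eval q) :
    ∀ i ≤ c.sum - c.length, 0 < f.coeff i :=
  reduced_composition_polynomial_positive_general c f hf
end

section
/- Let c = (c_1,…,c_k) be a composition with partial sums β_i = c_1+⋯+c_i for 0 ≤ i ≤ k, and let q be a real number. Let h(x) = a_0 + a_1x + ⋯ + a_kx^k be the unique polynomial of degree at most k satisfying h(β_i) = q^{β_i} for every i = 0,1,…,k (the Lagrange interpolating polynomial at the k+1 distinct nodes β_0,…,β_k). Then its top coefficient satisfies a_k = (−1)^k · g_c(q). -/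
/-!
The top coefficient of the polynomial interpolating `x ↦ q ^ x` at the nodes `β_0 < ⋯ < β_k`
is the divided difference `∑ᵢ q ^ βᵢ / ∏_{j ≠ i} (βᵢ - βⱼ)`. One shows by induction on `k`
that the inner iterated integral, as a function of its upper limit `u`, is `(-1) ^ k` times
the divided difference of `b ↦ q ^ b * u ^ (β_k - b)`: integrating against `t ^ (c_{k+1} - 1)`
turns each term into a difference `u ^ m - q ^ m`, and the constant `q ^ β_{k+1}` left over
becomes the term of the new node `β_{k+1}` because divided differences annihilate constants.
-/

open MeasureTheory

open Finset Polynomial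

section DividedDiff

variable {K : Type*} [Field K]

def dividedDiff (s : Finset ℕ) (f : ℕ → K) : K :=
  ∑ b ∈ s, f b / ∏ b' ∈ s.erase b, ((b : K) - b')

theorem dividedDiff_congr {s : Finset ℕ} {f g : ℕ → K} (hfg : ∀ b ∈ s, f b = g b) :
    dividedDiff s f = dividedDiff s g :=
  sum_congr rfl fun b hb => by rw [hfg b hb]

theorem coeff_eq_dividedDiff [CharZero K] (s : Finset ℕ) {P : K[X]} (hP : P.degree < #s) :
    P.coeff (#s - 1) = dividedDiff s (fun b => P.eval (b : K)) :=
  Lagrange.coeff_eq_sum Nat.cast_injective.injOn hP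

theorem dividedDiff_const [CharZero K] {s : Finset ℕ} (hs : 2 ≤ #s) (a : K) :
    dividedDiff s (fun _ => a) = 0 := by
  have hdeg : (C a).degree < #s :=
    (degree_C_le).trans_lt (by exact_mod_cast (by omega : 0 < #s))
  simpa [coeff_C, show #s - 1 ≠ 0 by omega] using (coeff_eq_dividedDiff s hdeg).symm

theorem dividedDiff_sub (s : Finset ℕ) (f g : ℕ → K) :
    dividedDiff s (fun b => f b - g b) = dividedDiff s f - dividedDiff s g := by
  simp only [dividedDiff, sub_div, sum_sub_distrib]

theorem dividedDiff_neg (s : Finset ℕ) (f : ℕ → K) :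
    dividedDiff s (fun b => -f b) = -dividedDiff s f := by
  simp only [dividedDiff, neg_div, sum_neg_distrib]

theorem dividedDiff_insert_of_eq_zero {s : Finset ℕ} {x : ℕ} (hx : x ∉ s) {f : ℕ → K}
    (hf : f x = 0) :
    dividedDiff (insert x s) f = dividedDiff s (fun b => f b / ((b : K) - x)) := by
  rw [dividedDiff, sum_insert hx, hf, zero_div, zero_add]
  refine sum_congr rfl fun b hb => ?_
  have hbx : x ≠ b := fun h => hx (h ▸ hb)
  rw [erase_insert_of_ne hbx, prod_insert (fun h => hx (mem_of_mem_erase h)), div_div,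
    mul_comm]

end DividedDiff

theorem integral_pow_mul_dividedDiff {s : Finset ℕ} {n a : ℕ} (hle : ∀ b ∈ s, b ≤ n)
    (ha : 0 < a) (q u : ℝ) :
    ∫ t in q..u, t ^ (a - 1) * dividedDiff s (fun b => q ^ b * t ^ (n - b)) =
      dividedDiff s (fun b => q ^ b * (u ^ (n + a - b) - q ^ (n + a - b)) / (n + a - b : ℕ)) := by
  simp only [dividedDiff, mul_sum]
  rw [intervalIntegral.integral_finsetSum fun b _ =>
    (by fun_prop : Continuous _).intervalIntegrable _ _]
  refine sum_congr rfl fun b hb => ?_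
  have hb := hle b hb
  have hexp : a - 1 + (n - b) = n + a - b - 1 := by omega
  have hcast : ((n + a - b - 1 : ℕ) : ℝ) + 1 = (n + a - b : ℕ) := by
    rw [← Nat.cast_succ]; congr 1; omega
  calc ∫ t in q..u, t ^ (a - 1) * (q ^ b * t ^ (n - b) / ∏ b' ∈ s.erase b, ((b : ℝ) - b'))
      = ∫ t in q..u, (q ^ b / ∏ b' ∈ s.erase b, ((b : ℝ) - b')) * t ^ (n + a - b - 1) := by
        congr 1 with t
        rw [← hexp, pow_add]; ring
    _ = (q ^ b / ∏ b' ∈ s.erase b, ((b : ℝ) - b')) *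
          ((u ^ (n + a - b) - q ^ (n + a - b)) / (n + a - b : ℕ)) := by
        rw [intervalIntegral.integral_const_mul, integral_pow, hcast,
          show n + a - b - 1 + 1 = n + a - b by omega]
    _ = _ := by ring

def betaNodes (c : List ℕ) : Finset ℕ := (range (c.length + 1)).image (beta c)

theorem beta_append_of_le {c : List ℕ} {i : ℕ} (hi : i ≤ c.length) (d : List ℕ) :
    beta (c ++ d) i = beta c i := by
  rw [beta, beta, List.take_append_of_le_length hi]

theorem betaNodes_append_singleton (c : List ℕ) (a : ℕ) :
    betaNodes (c ++ [a]) = insert (c.sum + a) (betaNodes c) := by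
  rw [betaNodes, betaNodes, List.length_append, List.length_singleton, range_add_one,
    image_insert]
  congr 1
  · simp [beta]
  · exact image_congr fun i hi => beta_append_of_le (by simpa [Nat.lt_succ_iff] using hi) _

theorem le_sum_of_mem_betaNodes {c : List ℕ} {b : ℕ} (hb : b ∈ betaNodes c) : b ≤ c.sum := by
  obtain ⟨i, -, rfl⟩ := mem_image.mp hb
  exact (List.take_sublist i c).sum_le_sum (fun _ _ => Nat.zero_le _)

theorem card_betaNodes {c : List ℕ} (hpos : ∀ a ∈ c, 0 < a) :
    #(betaNodes c) = c.length + 1 := by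
  induction c using List.reverseRecOn with
  | nil => simp [betaNodes]
  | append_singleton c a ih =>
    have ha : 0 < a := hpos a (by simp)
    have hnew : c.sum + a ∉ betaNodes c := fun h => by
      have := le_sum_of_mem_betaNodes h; omega
    rw [betaNodes_append_singleton, card_insert_of_notMem hnew,
      ih fun x hx => hpos x (by simp [hx]), List.length_append, List.length_singleton]

theorem gAux_reverse_eq_dividedDiff {c : List ℕ} (hpos : ∀ a ∈ c, 0 < a) (q u : ℝ) :
    gAux c.reverse q u =
      (-1) ^ c.length * dividedDiff (betaNodes c) (fun b => q ^ b * u ^ (c.sum - b)) := by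
  induction c using List.reverseRecOn generalizing u with
  | nil => simp [gAux, betaNodes, beta, dividedDiff]
  | append_singleton c a ih =>
    have ha : 0 < a := hpos a (by simp)
    have hle : ∀ b ∈ betaNodes c, b ≤ c.sum := fun b => le_sum_of_mem_betaNodes
    have hnew : c.sum + a ∉ betaNodes c := fun h => by have := hle _ h; omega
    have hcard : 2 ≤ #(betaNodes (c ++ [a])) := by
      rw [card_betaNodes hpos]; simp
    have hinner : gAux (a :: c.reverse) q u = (-1) ^ c.length * dividedDiff (betaNodes c)
        (fun b => q ^ b * (u ^ (c.sum + a - b) - q ^ (c.sum + a - b)) / (c.sum + a - b : ℕ)) := by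
      simp only [gAux, ih (fun x hx => hpos x (by simp [hx])), mul_left_comm _ ((-1 : ℝ) ^ _),
        intervalIntegral.integral_const_mul, integral_pow_mul_dividedDiff hle ha]
    -- subtracting the constant `q ^ (c.sum + a)` makes the new node's term vanish
    have hshift : dividedDiff (betaNodes (c ++ [a]))
        (fun b => q ^ b * u ^ (c.sum + a - b)) = dividedDiff (betaNodes (c ++ [a]))
          (fun b => q ^ b * u ^ (c.sum + a - b) - q ^ (c.sum + a)) := by
      rw [dividedDiff_sub, dividedDiff_const hcard, sub_zero]
    rw [List.reverse_append, List.reverse_singleton, List.singleton_append, hinner,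
      List.sum_append, List.sum_singleton, hshift, betaNodes_append_singleton,
      dividedDiff_insert_of_eq_zero hnew (by simp), List.length_append, List.length_singleton,
      pow_succ, mul_neg_one, neg_mul, ← mul_neg, ← dividedDiff_neg]
    congr 1
    refine dividedDiff_congr fun b hb => ?_
    have hb := hle b hb
    have hq : q ^ (c.sum + a) = q ^ b * q ^ (c.sum + a - b) := by
      rw [← pow_add]; congr 1; omega
    have hgap : (b : ℝ) - (c.sum + a : ℕ) = -(c.sum + a - b : ℕ) := by
      rw [Nat.cast_sub (by omega)]; ring
    rw [hq, hgap]
    ring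

/-- Theorem: if `h` is the polynomial of degree at most `k` interpolating the
points `(β_i, q^{β_i})` for `i = 0, …, k`, then its top coefficient is
`a_k = (−1)^k · g_c(q)`. -/
theorem composition_polynomial_interpolation (c : List ℕ) (hpos : ∀ a ∈ c, 0 < a)
    (q : ℝ) (h : Polynomial ℝ) (hdeg : h.degree ≤ c.length)
    (hinterp : ∀ i ∈ Finset.range (c.length + 1),
      h.eval ((beta c i : ℝ)) = q ^ beta c i) :
    h.coeff c.length = (-1) ^ c.length * gcomp c q := by
  have hcard := card_betaNodes hpos
  have hlt : h.degree < #(betaNodes c) := by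
    rw [hcard]; exact hdeg.trans_lt (by exact_mod_cast c.length.lt_succ_self)
  have hvalues : ∀ b ∈ betaNodes c, h.eval (b : ℝ) = q ^ b := by
    intro b hb
    obtain ⟨i, hi, rfl⟩ := mem_image.mp hb
    exact hinterp i hi
  calc h.coeff c.length = dividedDiff (betaNodes c) (fun b => h.eval (b : ℝ)) := by
        simpa [hcard] using coeff_eq_dividedDiff _ hlt
    _ = dividedDiff (betaNodes c) (fun b => q ^ b) := dividedDiff_congr hvalues
    _ = (-1) ^ c.length * gcomp c q := by
        rw [gcomp, gAux_reverse_eq_dividedDiff hpos, ← mul_assoc, ← mul_pow]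
        simp
end

section
/- Let c = (c_1,…,c_k) be a composition with k ≥ 2 parts. Let c^1 = (c_1+c_2, c_3,…,c_k) be the composition obtained by merging the first two parts, and let c^L = (c_2,…,c_k). Then for every real q, g_c(q) = (1/c_1)·g_{c^1}(q) − (q^{c_1}/c_1)·g_{c^L}(q). -/
open MeasureTheory

/-! The innermost integral of `g_c` is `∫_q^{t_2} t_1^{c_1-1} dt_1 = (t_2^{c_1} - q^{c_1})/c_1`.
Multiplied by `t_2^{c_2-1}` it becomes `(t_2^{c_1+c_2-1} - q^{c_1} t_2^{c_2-1})/c_1`, the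
innermost integrands of `g_{c^1}` and `g_{c^L}`; the outer integrations are linear. -/

theorem gAux_continuous (L : List ℕ) (q : ℝ) : Continuous (gAux L q) := by
  induction L with
  | nil => exact continuous_const
  | cons a rest ih =>
    exact intervalIntegral.continuous_primitive
      (fun _ _ => ((continuous_pow _).mul ih).intervalIntegrable _ _) q

theorem gAux_singleton {a : ℕ} (ha : 0 < a) (q t : ℝ) :
    gAux [a] q t = (t ^ a - q ^ a) / a := by
  simp only [gAux, mul_one, integral_pow, Nat.sub_add_cancel ha, Nat.cast_pred ha, sub_add_cancel]

theorem gAux_pair {c1 c2 : ℕ} (h1 : 0 < c1) (h2 : 0 < c2) (q u : ℝ) :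
    gAux [c2, c1] q u = 1 / (c1 : ℝ) * gAux [c1 + c2] q u - q ^ c1 / c1 * gAux [c2] q u := by
  have hpow (t : ℝ) : t ^ (c2 - 1) * t ^ c1 = t ^ (c1 + c2 - 1) := by
    rw [← pow_add]; congr 1; omega
  have hintegrand : (fun t => t ^ (c2 - 1) * gAux [c1] q t) =
      fun t => 1 / (c1 : ℝ) * t ^ (c1 + c2 - 1) - q ^ c1 / c1 * t ^ (c2 - 1) := by
    funext t
    rw [gAux_singleton h1, ← hpow]
    ring
  have hint (a : ℕ) (b : ℝ) : IntervalIntegrable (fun t : ℝ => b * t ^ a) volume q u :=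
    (continuous_const.mul (continuous_pow a)).intervalIntegrable _ _
  rw [gAux, hintegrand, intervalIntegral.integral_sub (hint _ _) (hint _ _),
    intervalIntegral.integral_const_mul, intervalIntegral.integral_const_mul]
  simp only [gAux, mul_one]

theorem gAux_append_eq_sub {M N P : List ℕ} {q α β : ℝ}
    (h : ∀ t, gAux M q t = α * gAux N q t - β * gAux P q t) (L : List ℕ) (u : ℝ) :
    gAux (L ++ M) q u = α * gAux (L ++ N) q u - β * gAux (L ++ P) q u := by
  induction L generalizing u with
  | nil => exact h u
  | cons a L ih =>
    have hint (K : List ℕ) (b : ℝ) :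
        IntervalIntegrable (fun t => b * (t ^ (a - 1) * gAux (L ++ K) q t)) volume q u :=
      (continuous_const.mul ((continuous_pow _).mul (gAux_continuous _ q))).intervalIntegrable _ _
    simp only [List.cons_append, gAux]
    rw [← intervalIntegral.integral_const_mul, ← intervalIntegral.integral_const_mul,
      ← intervalIntegral.integral_sub (hint _ _) (hint _ _)]
    congr 1
    funext t
    rw [ih]
    ring

theorem composition_polynomial_recursion_general (c1 c2 : ℕ) (rest : List ℕ)
    (h1 : 0 < c1) (h2 : 0 < c2) (q : ℝ) :
    gcomp (c1 :: c2 :: rest) q =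
      (1 / (c1 : ℝ)) * gcomp ((c1 + c2) :: rest) q -
        (q ^ c1 / (c1 : ℝ)) * gcomp (c2 :: rest) q := by
  simpa [gcomp, List.reverse_cons, List.append_assoc] using
    gAux_append_eq_sub (gAux_pair h1 h2 q) rest.reverse 1

/-- Theorem: for a composition `c = (c_1, c_2, …, c_k)` with `k ≥ 2`,
`g_c(q) = (1/c_1)·g_{c^1}(q) − (q^{c_1}/c_1)·g_{c^L}(q)`, where
`c^1 = (c_1+c_2, c_3, …, c_k)` and `c^L = (c_2, …, c_k)`. -/
theorem composition_polynomial_recursion (c1 c2 : ℕ) (rest : List ℕ)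
    (h1 : 0 < c1) (h2 : 0 < c2) (hrest : ∀ a ∈ rest, 0 < a) (q : ℝ) :
    gcomp (c1 :: c2 :: rest) q =
      (1 / (c1 : ℝ)) * gcomp ((c1 + c2) :: rest) q -
        (q ^ c1 / (c1 : ℝ)) * gcomp (c2 :: rest) q :=
  composition_polynomial_recursion_general c1 c2 rest h1 h2 q
end

section
/- Let c = (c_1,…,c_k) be a composition of size n with k ≥ 2, with partial sums β_i = c_1+⋯+c_i for 0 ≤ i ≤ k. Then for every real q (nonzero where 1/q appears implicitly, i.e. for all q): (i) for each 1 ≤ m ≤ k−1, g_{c^m}(q) = Σ_{i=0}^k q^{β_i}(β_m − β_i) / ∏_{j≠i}(β_j − β_i); (ii) g_{c^R}(q) = Σ_{i=0}^k q^{β_i}(n − β_i) / ∏_{j≠i}(β_j − β_i); and (iii) q^{c_1}·g_{c^L}(q) = −Σ_{i=0}^k q^{β_i}·β_i / ∏_{j≠i}(β_j − β_i). -/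
open MeasureTheory

/-- The product `∏_{j ≠ i} (β_j − β_i)` over `0 ≤ j ≤ k`, `j ≠ i`. -/
noncomputable def vprod (c : List ℕ) (i : ℕ) : ℝ :=
  ∏ j ∈ (Finset.range (c.length + 1)).erase i, ((beta c j : ℝ) - (beta c i : ℝ))

/-!
Integrating out one variable at a time shows that, for a composition `c` with set of partial
sums `B = {β_0, …, β_k}`, `g_c(q) = ∑_{x ∈ B} q ^ x / ∏_{y ∈ B, y ≠ x} (y - x)`; the induction
step closes by the Lagrange identity `∑_{x ∈ B} ∏_{y ≠ x} (y - x)⁻¹ = 0`. Merging `c_m` and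
`c_{m+1}` removes `β_m` from `B`, dropping `c_k` removes `β_k = n`, and dropping `c_1` removes
`β_0 = 0` and shifts the remaining nodes by `c_1`. Removing a node `m` from `B` multiplies the
weight of every other node `x` by `m - x`, which gives the three formulas.
-/

open Finset

theorem Finset.image_erase_of_injOn {α β : Type*} [DecidableEq α] [DecidableEq β] {f : α → β}
    {s : Finset α} (hf : Set.InjOn f s) {a : α} (ha : a ∈ s) :
    (s.image f).erase (f a) = (s.erase a).image f := by
  ext y
  simp only [mem_erase, mem_image]
  constructor
  · rintro ⟨hne, b, hb, rfl⟩
    exact ⟨b, ⟨fun h => hne (h ▸ rfl), hb⟩, rfl⟩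
  · rintro ⟨b, ⟨hba, hb⟩, rfl⟩
    exact ⟨fun h => hba (hf hb ha h), b, hb, rfl⟩

section NodeWeight

noncomputable def nodeWeight (S : Finset ℕ) (x : ℕ) : ℝ := ∏ y ∈ S.erase x, ((y : ℝ) - x)⁻¹

/-- Up to the sign `(-1) ^ (#S - 1)`, the divided difference of `t ↦ q ^ t` at the nodes `S`. -/
noncomputable def powDivDiff (S : Finset ℕ) (q : ℝ) : ℝ := ∑ x ∈ S, q ^ x * nodeWeight S x

/-- With the nodes `-x`, Lagrange's `v x - v y` becomes `y - x`; the sum is the coefficient of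
`X ^ (#S - 1)` in the interpolant of the constant `1`. -/
theorem sum_nodeWeight_eq_zero {S : Finset ℕ} (hS : 2 ≤ S.card) :
    ∑ x ∈ S, nodeWeight S x = 0 := by
  have hinj : Set.InjOn (fun x : ℕ => -(x : ℝ)) S := fun x _ y _ h => by simpa using h
  have h := Lagrange.coeff_eq_sum hinj (P := 1)
    (by rw [Polynomial.degree_one]; exact_mod_cast (by omega : 0 < S.card))
  rw [Polynomial.coeff_one, if_neg (by omega)] at h
  simpa [nodeWeight, neg_add_eq_sub, prod_inv_distrib, div_eq_mul_inv] using h.symm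

theorem sum_nodeWeight_insert {S : Finset ℕ} {z : ℕ} (hz : z ∉ S) (hS : S.Nonempty) :
    ∑ x ∈ S, nodeWeight (insert z S) x = -nodeWeight (insert z S) z := by
  have h := sum_nodeWeight_eq_zero (S := insert z S)
    (by rw [card_insert_of_notMem hz]; exact Nat.succ_le_succ (card_pos.2 hS))
  rw [sum_insert hz] at h
  linarith

theorem nodeWeight_insert {S : Finset ℕ} {x z : ℕ} (hz : z ∉ S) (hx : x ∈ S) :
    nodeWeight (insert z S) x = ((z : ℝ) - x)⁻¹ * nodeWeight S x := by
  have hzx : z ≠ x := fun h => hz (h ▸ hx)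
  rw [nodeWeight, erase_insert_of_ne hzx, prod_insert fun h => hz (mem_of_mem_erase h),
    nodeWeight]

theorem nodeWeight_image_add (S : Finset ℕ) (a x : ℕ) :
    nodeWeight (S.image (a + ·)) (a + x) = nodeWeight S x := by
  rw [nodeWeight, ← image_erase (add_right_injective a),
    prod_image fun _ _ _ _ h => by simpa using h, nodeWeight]
  refine prod_congr rfl fun y _ => ?_
  push_cast
  ring_nf

theorem powDivDiff_image_add (S : Finset ℕ) (a : ℕ) (q : ℝ) :
    powDivDiff (S.image (a + ·)) q = q ^ a * powDivDiff S q := by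
  rw [powDivDiff, powDivDiff, sum_image fun _ _ _ _ h => by simpa using h, mul_sum]
  refine sum_congr rfl fun x _ => ?_
  rw [nodeWeight_image_add, pow_add, mul_assoc]

theorem sum_mul_sub_mul_nodeWeight {S : Finset ℕ} {m : ℕ} (hm : m ∈ S) (f : ℕ → ℝ) :
    ∑ x ∈ S, f x * ((m : ℝ) - x) * nodeWeight S x
      = ∑ x ∈ S.erase m, f x * nodeWeight (S.erase m) x := by
  rw [← sum_erase_add _ _ hm, sub_self, mul_zero, zero_mul, add_zero]
  refine sum_congr rfl fun x hx => ?_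
  have hxm : (m : ℝ) - x ≠ 0 := sub_ne_zero.2 (by exact_mod_cast (ne_of_mem_erase hx).symm)
  conv_lhs => rw [← insert_erase hm, nodeWeight_insert (notMem_erase m S) hx]
  field_simp

end NodeWeight

section PartialSums

def partialSumSet (c : List ℕ) : Finset ℕ := (range (c.length + 1)).image (beta c)

theorem beta_le_sum (c : List ℕ) (i : ℕ) : beta c i ≤ c.sum :=
  (List.take_sublist i c).sum_le_sum fun _ _ => Nat.zero_le _

theorem beta_strictMonoOn {c : List ℕ} (hpos : ∀ a ∈ c, 0 < a) :
    StrictMonoOn (beta c) (Set.Iic c.length) :=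
  strictMonoOn_Iic_of_lt_succ fun i hi => by
    rw [Order.succ_eq_add_one, beta, beta, List.sum_take_succ c i hi]
    exact Nat.lt_add_of_pos_right (hpos _ (List.getElem_mem hi))

theorem beta_mem_partialSumSet {c : List ℕ} {i : ℕ} (hi : i ≤ c.length) :
    beta c i ∈ partialSumSet c :=
  mem_image_of_mem _ (mem_range.2 (Nat.lt_succ_of_le hi))

theorem zero_mem_partialSumSet (c : List ℕ) : 0 ∈ partialSumSet c :=
  beta_mem_partialSumSet (Nat.zero_le _)

theorem sum_mem_partialSumSet (c : List ℕ) : c.sum ∈ partialSumSet c := by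
  simpa [beta] using beta_mem_partialSumSet (le_refl c.length)

theorem partialSumSet_nil : partialSumSet [] = {0} := rfl

theorem partialSumSet_cons (a : ℕ) (c : List ℕ) :
    partialSumSet (a :: c) = insert 0 ((partialSumSet c).image (a + ·)) := by
  rw [partialSumSet, List.length_cons, range_add_one', image_insert, map_eq_image, image_image,
    partialSumSet, image_image]
  rfl

theorem partialSumSet_append (u w : List ℕ) :
    partialSumSet (u ++ w) = partialSumSet u ∪ (partialSumSet w).image (u.sum + ·) := by
  induction u with
  | nil =>
    simp [partialSumSet_nil, insert_eq_of_mem (zero_mem_partialSumSet w)]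
  | cons a u ih =>
    rw [List.cons_append, partialSumSet_cons, ih, partialSumSet_cons, image_union, image_image,
      insert_union]
    simp only [List.sum_cons, add_assoc, Function.comp_def]

theorem le_sum_of_mem_partialSumSet {c : List ℕ} {x : ℕ} (hx : x ∈ partialSumSet c) :
    x ≤ c.sum := by
  obtain ⟨i, -, rfl⟩ := mem_image.1 hx
  exact beta_le_sum c i

theorem partialSumSet_append_singleton (c : List ℕ) (a : ℕ) :
    partialSumSet (c ++ [a]) = insert (c.sum + a) (partialSumSet c) := by
  rw [partialSumSet_append, partialSumSet_cons, partialSumSet_nil]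
  simp [sum_mem_partialSumSet]

theorem partialSumSet_dropLast {c : List ℕ} (hpos : ∀ a ∈ c, 0 < a) (hc : c ≠ []) :
    partialSumSet c.dropLast = (partialSumSet c).erase c.sum := by
  have hlast := hpos _ (List.getLast_mem hc)
  conv_rhs => rw [← List.dropLast_append_getLast hc, partialSumSet_append_singleton,
    List.sum_append, List.sum_singleton]
  refine (erase_insert fun h => ?_).symm
  have := le_sum_of_mem_partialSumSet h
  omega

theorem partialSumSet_cons_erase_zero {a : ℕ} (ha : 0 < a) (c : List ℕ) :
    (partialSumSet (a :: c)).erase 0 = (partialSumSet c).image (a + ·) := by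
  rw [partialSumSet_cons]
  exact erase_insert fun h => by obtain ⟨x, -, hx⟩ := mem_image.1 h; omega

theorem partialSumSet_cons_cons (a b : ℕ) (v : List ℕ) :
    partialSumSet (a :: b :: v) = insert a (partialSumSet ((a + b) :: v)) := by
  simp only [partialSumSet_cons, image_insert, image_image, add_zero, Function.comp_def, add_assoc]
  exact insert_comm _ _ _

theorem partialSumSet_merge {u v : List ℕ} {a b : ℕ} (ha : 0 < a) (hb : 0 < b) :
    partialSumSet (u ++ (a + b) :: v) = (partialSumSet (u ++ a :: b :: v)).erase (u.sum + a) := by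
  rw [partialSumSet_append u (a :: b :: v), partialSumSet_cons_cons, image_insert, union_insert,
    ← partialSumSet_append]
  refine (erase_insert fun h => ?_).symm
  rcases mem_union.1 (partialSumSet_append u _ ▸ h) with h | h
  · have := le_sum_of_mem_partialSumSet h
    omega
  obtain ⟨y, hy, hya⟩ := mem_image.1 h
  rcases mem_insert.1 (partialSumSet_cons _ _ ▸ hy) with rfl | hy
  · omega
  obtain ⟨z, -, rfl⟩ := mem_image.1 hy
  omega

theorem beta_append_length (u w : List ℕ) (j : ℕ) :
    beta (u ++ w) (u.length + j) = u.sum + beta w j := by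
  rw [beta, List.take_append, List.take_of_length_le (Nat.le_add_right _ _),
    Nat.add_sub_cancel_left, List.sum_append, beta]

end PartialSums

theorem gAux_reverse_eq {c : List ℕ} (hpos : ∀ a ∈ c, 0 < a) (q u : ℝ) :
    gAux c.reverse q u =
      ∑ x ∈ partialSumSet c, q ^ x * u ^ (c.sum - x) * nodeWeight (partialSumSet c) x := by
  induction c using List.reverseRecOn generalizing u with
  | nil => simp [gAux, partialSumSet_nil, nodeWeight]
  | append_singleton c a ih =>
    have ha : 0 < a := hpos a (by simp)
    set S := partialSumSet c
    set N := c.sum + a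
    have hN : N ∉ S := fun h => by have := le_sum_of_mem_partialSumSet h; omega
    have hterm : ∀ x ∈ S, ∫ t in q..u, t ^ (a - 1) * (q ^ x * t ^ (c.sum - x) * nodeWeight S x)
        = (q ^ x * u ^ (N - x) - q ^ N) * nodeWeight (insert N S) x := by
      intro x hx
      have hxc := le_sum_of_mem_partialSumSet hx
      have hintegrand : ∀ t : ℝ, t ^ (a - 1) * (q ^ x * t ^ (c.sum - x) * nodeWeight S x)
          = t ^ (N - x - 1) * (q ^ x * nodeWeight S x) := fun t => by
        rw [show N - x - 1 = (a - 1) + (c.sum - x) by omega, pow_add]; ring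
      have hcast : ((N - x - 1 : ℕ) : ℝ) + 1 = (N : ℝ) - x := by
        rw [Nat.cast_sub (by omega), Nat.cast_sub (by omega)]; ring
      have hqN : q ^ x * q ^ (N - x) = q ^ N := by rw [← pow_add]; congr 1; omega
      simp_rw [hintegrand]
      rw [intervalIntegral.integral_mul_const, integral_pow, Nat.sub_add_cancel (by omega), hcast,
        nodeWeight_insert hN hx, ← hqN]
      ring
    calc gAux (c ++ [a]).reverse q u = ∫ t in q..u, t ^ (a - 1) * gAux c.reverse q t := by
          rw [List.reverse_append, List.reverse_singleton, List.singleton_append, gAux]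
      _ = ∑ x ∈ S, ∫ t in q..u, t ^ (a - 1) * (q ^ x * t ^ (c.sum - x) * nodeWeight S x) := by
          simp_rw [ih fun b hb => hpos b (by simp [hb]), mul_sum]
          exact intervalIntegral.integral_finsetSum fun x _ =>
            Continuous.intervalIntegrable (by fun_prop) _ _
      _ = ∑ x ∈ S, (q ^ x * u ^ (N - x) - q ^ N) * nodeWeight (insert N S) x :=
          sum_congr rfl hterm
      _ = ∑ x ∈ insert N S, q ^ x * u ^ (N - x) * nodeWeight (insert N S) x := by
          rw [sum_insert hN]
          simp only [sub_mul, sum_sub_distrib, ← mul_sum,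
            sum_nodeWeight_insert hN ⟨0, zero_mem_partialSumSet c⟩, Nat.sub_self, pow_zero, mul_one]
          ring
      _ = _ := by rw [partialSumSet_append_singleton, List.sum_append, List.sum_singleton]

theorem gcomp_eq_powDivDiff {c : List ℕ} (hpos : ∀ a ∈ c, 0 < a) (q : ℝ) :
    gcomp c q = powDivDiff (partialSumSet c) q := by
  simp [gcomp, gAux_reverse_eq hpos, powDivDiff]

theorem sum_div_vprod_eq {c : List ℕ} (hpos : ∀ a ∈ c, 0 < a) (f : ℕ → ℝ) :
    ∑ i ∈ range (c.length + 1), f (beta c i) / vprod c i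
      = ∑ x ∈ partialSumSet c, f x * nodeWeight (partialSumSet c) x := by
  have hinj : Set.InjOn (beta c) (range (c.length + 1)) :=
    (beta_strictMonoOn hpos).injOn.mono fun i hi => Nat.lt_succ_iff.1 (mem_range.1 hi)
  rw [partialSumSet, sum_image hinj]
  refine sum_congr rfl fun i hi => ?_
  rw [div_eq_mul_inv, vprod, nodeWeight, image_erase_of_injOn hinj hi,
    prod_image (hinj.mono (erase_subset i _)), prod_inv_distrib]

theorem sum_pow_mul_sub_div_vprod {c : List ℕ} (hpos : ∀ a ∈ c, 0 < a) {m : ℕ}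
    (hm : m ∈ partialSumSet c) (q : ℝ) :
    ∑ i ∈ range (c.length + 1), q ^ beta c i * ((m : ℝ) - beta c i) / vprod c i
      = powDivDiff ((partialSumSet c).erase m) q := by
  rw [sum_div_vprod_eq hpos (fun x => q ^ x * ((m : ℝ) - x)), powDivDiff,
    sum_mul_sub_mul_nodeWeight hm]

/-- `c^m` (`1 ≤ m ≤ k−1`) is encoded by writing `c = u ++ a :: b :: v` with `m = |u| + 1`. -/
theorem merged_truncated_closed_forms (c : List ℕ) (hpos : ∀ a ∈ c, 0 < a)
    (hk : 2 ≤ c.length) :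
    (∀ (u : List ℕ) (a b : ℕ) (v : List ℕ), c = u ++ a :: b :: v →
      ∀ q : ℝ, gcomp (u ++ (a + b) :: v) q =
        ∑ i ∈ Finset.range (c.length + 1),
          q ^ beta c i * ((beta c (u.length + 1) : ℝ) - (beta c i : ℝ)) / vprod c i) ∧
    (∀ q : ℝ, gcomp c.dropLast q =
        ∑ i ∈ Finset.range (c.length + 1),
          q ^ beta c i * ((c.sum : ℝ) - (beta c i : ℝ)) / vprod c i) ∧
    (∀ q : ℝ, q ^ c.headI * gcomp c.tail q =
        -∑ i ∈ Finset.range (c.length + 1),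
          q ^ beta c i * (beta c i : ℝ) / vprod c i) := by
  have hne : c ≠ [] := List.ne_nil_of_length_pos (by omega)
  refine ⟨?_, fun q => ?_, fun q => ?_⟩
  · rintro u a b v rfl q
    have hmerged : ∀ x ∈ u ++ (a + b) :: v, 0 < x := by
      simp only [List.mem_append, List.mem_cons] at hpos ⊢
      grind
    have hβ : beta (u ++ a :: b :: v) (u.length + 1) = u.sum + a := beta_append_length _ _ 1
    rw [hβ, sum_pow_mul_sub_div_vprod hpos (hβ ▸ beta_mem_partialSumSet (by simp)),
      ← partialSumSet_merge (hpos a (by simp)) (hpos b (by simp)), gcomp_eq_powDivDiff hmerged]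
  · rw [sum_pow_mul_sub_div_vprod hpos (sum_mem_partialSumSet c),
      ← partialSumSet_dropLast hpos hne,
      gcomp_eq_powDivDiff fun x hx => hpos x (List.mem_of_mem_dropLast hx)]
  · obtain ⟨a, c, rfl⟩ := List.exists_cons_of_ne_nil hne
    have key := sum_pow_mul_sub_div_vprod hpos (zero_mem_partialSumSet (a :: c)) q
    rw [partialSumSet_cons_erase_zero (hpos a (by simp)), powDivDiff_image_add,
      ← gcomp_eq_powDivDiff fun x hx => hpos x (by simp [hx])] at key
    simp [← key, neg_div]
end
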